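/- Let X be a random variable with E[|X|] < ∞ and N ~ N(0,1) independent of X, and let Y = X + N with density p_Y(y) = (1/√(2π)) E[e^{−(y−X)²/2}]. Writing p_Y = e^{−Q}, the function Q is differentiable and for every y ∈ ℝ: Q′(y) = −p_Y′(y)/p_Y(y) = y − E[X e^{−(y−X)²/2}]/E[e^{−(y−X)²/2}] = y − E[X | Y = y] = E[N | Y = y]. -/

import Mathlib

open MeasureTheory ProbabilityTheory Real Filter

/-!
Differentiating `g(y) = ∫ exp (-(y - X)² / 2) dμ` under the integral sign is legitimate because the
`y`-derivative `-(y - X) exp (-(y - X)² / 2)` is bounded by `1` uniformly in `y`; so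
`g' = -∫ (y - X) exp (-(y - X)² / 2) dμ`, and `g > 0` makes `-log (c g)` differentiable with
derivative `-g'/g`.
-/

lemma abs_mul_exp_neg_sq_div_two_le_one (t : ℝ) : |t * exp (-t ^ 2 / 2)| ≤ 1 := by
  have h_abs_le : |t| ≤ exp (t ^ 2 / 2) := by
    nlinarith [add_one_le_exp (t ^ 2 / 2), sq_abs t, sq_nonneg (|t| - 1)]
  calc |t * exp (-t ^ 2 / 2)| = |t| * exp (-t ^ 2 / 2) := by
        rw [abs_mul, abs_of_pos (exp_pos _)]
    _ ≤ exp (t ^ 2 / 2) * exp (-t ^ 2 / 2) := by gcongr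
    _ = 1 := by rw [← exp_add, show t ^ 2 / 2 + -t ^ 2 / 2 = 0 by ring, exp_zero]

lemma exp_neg_sq_div_two_le_one (t : ℝ) : exp (-t ^ 2 / 2) ≤ 1 :=
  exp_le_one_iff.2 (by nlinarith [sq_nonneg t])

lemma hasDerivAt_exp_neg_sq_sub_div_two (c x : ℝ) :
    HasDerivAt (fun y => exp (-(y - c) ^ 2 / 2)) (-((x - c) * exp (-(x - c) ^ 2 / 2))) x := by
  have h_exponent : HasDerivAt (fun y => -(y - c) ^ 2 / 2) (-(x - c)) x :=
    ((((hasDerivAt_id' x).sub_const c).pow 2).neg.div_const 2).congr_deriv (by norm_num; ring)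
  convert h_exponent.exp using 1
  ring

section GaussianSmoothing

variable {Ω : Type*} [MeasurableSpace Ω] {μ : Measure Ω} {X : Ω → ℝ}

lemma aestronglyMeasurable_exp_neg_sq_sub_div_two (hX : AEStronglyMeasurable X μ) (y : ℝ) :
    AEStronglyMeasurable (fun ω => exp (-(y - X ω) ^ 2 / 2)) μ :=
  (by fun_prop : Continuous fun x : ℝ => exp (-(y - x) ^ 2 / 2)).comp_aestronglyMeasurable hX

lemma integrable_mul_exp_neg_sq_sub_div_two (hX : Integrable X μ) (y : ℝ) :
    Integrable (fun ω => X ω * exp (-(y - X ω) ^ 2 / 2)) μ :=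
  hX.norm.mono' (hX.aestronglyMeasurable.mul
    (aestronglyMeasurable_exp_neg_sq_sub_div_two hX.aestronglyMeasurable y)) <|
    ae_of_all _ fun ω => by
      rw [norm_mul, norm_of_nonneg (exp_pos _).le]
      exact mul_le_of_le_one_right (norm_nonneg _) (exp_neg_sq_div_two_le_one _)

variable [IsFiniteMeasure μ]

lemma integrable_exp_neg_sq_sub_div_two (hX : AEStronglyMeasurable X μ) (y : ℝ) :
    Integrable (fun ω => exp (-(y - X ω) ^ 2 / 2)) μ :=
  (integrable_const 1).mono' (aestronglyMeasurable_exp_neg_sq_sub_div_two hX y) <|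
    ae_of_all _ fun ω => by
      rw [norm_of_nonneg (exp_pos _).le]
      exact exp_neg_sq_div_two_le_one _

lemma hasDerivAt_integral_exp_neg_sq_sub_div_two (hX : AEStronglyMeasurable X μ) (y : ℝ) :
    HasDerivAt (fun y => ∫ ω, exp (-(y - X ω) ^ 2 / 2) ∂μ)
      (-∫ ω, (y - X ω) * exp (-(y - X ω) ^ 2 / 2) ∂μ) y := by
  have h_meas : AEStronglyMeasurable
      (fun ω => -((y - X ω) * exp (-(y - X ω) ^ 2 / 2))) μ :=
    ((aestronglyMeasurable_const.sub hX).mul (aestronglyMeasurable_exp_neg_sq_sub_div_two hX y)).neg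
  have h := hasDerivAt_integral_of_dominated_loc_of_deriv_le (bound := fun _ => (1 : ℝ))
    univ_mem (Eventually.of_forall (aestronglyMeasurable_exp_neg_sq_sub_div_two hX))
    (integrable_exp_neg_sq_sub_div_two hX y) h_meas
    (ae_of_all _ fun ω x _ => by
      rw [norm_neg, Real.norm_eq_abs]
      exact abs_mul_exp_neg_sq_div_two_le_one _)
    (integrable_const 1)
    (ae_of_all _ fun ω x _ => hasDerivAt_exp_neg_sq_sub_div_two (X ω) x)
  rw [← integral_neg]
  exact h.2

lemma integral_sub_mul_exp_neg_sq_sub_div_two (hX : Integrable X μ) (y : ℝ) :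
    ∫ ω, (y - X ω) * exp (-(y - X ω) ^ 2 / 2) ∂μ =
      y * ∫ ω, exp (-(y - X ω) ^ 2 / 2) ∂μ - ∫ ω, X ω * exp (-(y - X ω) ^ 2 / 2) ∂μ := by
  simp_rw [sub_mul]
  rw [integral_sub ((integrable_exp_neg_sq_sub_div_two hX.aestronglyMeasurable y).const_mul y)
    (integrable_mul_exp_neg_sq_sub_div_two hX y), integral_const_mul]

variable [NeZero μ]

lemma integral_exp_neg_sq_sub_div_two_pos (hX : AEStronglyMeasurable X μ) (y : ℝ) :
    0 < ∫ ω, exp (-(y - X ω) ^ 2 / 2) ∂μ :=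
  integral_exp_pos (integrable_exp_neg_sq_sub_div_two hX y)

lemma hasDerivAt_neg_log_const_mul_integral_exp_neg_sq_sub_div_two
    (hX : AEStronglyMeasurable X μ) {c : ℝ} (hc : 0 < c) (y : ℝ) :
    HasDerivAt (fun y => -log (c * ∫ ω, exp (-(y - X ω) ^ 2 / 2) ∂μ))
      ((∫ ω, (y - X ω) * exp (-(y - X ω) ^ 2 / 2) ∂μ) / ∫ ω, exp (-(y - X ω) ^ 2 / 2) ∂μ) y := by
  have hg := integral_exp_neg_sq_sub_div_two_pos hX y
  refine (((hasDerivAt_integral_exp_neg_sq_sub_div_two hX y).const_mul c).log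
    (mul_pos hc hg).ne').neg.congr_deriv ?_
  rw [mul_neg, neg_div, neg_neg, mul_div_mul_left _ _ hc.ne']

end GaussianSmoothing

theorem deriv_neg_log_output_density_general
    {Ω : Type*} [MeasurableSpace Ω] (μ : Measure Ω) [IsProbabilityMeasure μ]
    (X : Ω → ℝ)
    (hXint : Integrable X μ)
    (pY Q : ℝ → ℝ)
    (hpY : ∀ y, pY y = (Real.sqrt (2 * π))⁻¹ * ∫ ω, Real.exp (-(y - X ω) ^ 2 / 2) ∂μ)
    (hQ : ∀ y, Q y = -Real.log (pY y)) :
    Differentiable ℝ Q ∧ ∀ y : ℝ,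
      deriv Q y = -(deriv pY y / pY y) ∧
      deriv Q y = y - (∫ ω, X ω * Real.exp (-(y - X ω) ^ 2 / 2) ∂μ) /
          (∫ ω, Real.exp (-(y - X ω) ^ 2 / 2) ∂μ) ∧
      deriv Q y = (∫ ω, (y - X ω) * Real.exp (-(y - X ω) ^ 2 / 2) ∂μ) /
          (∫ ω, Real.exp (-(y - X ω) ^ 2 / 2) ∂μ) := by
  obtain rfl : pY = fun y => (√(2 * π))⁻¹ * ∫ ω, exp (-(y - X ω) ^ 2 / 2) ∂μ := funext hpY
  obtain rfl : Q = fun y => -log ((√(2 * π))⁻¹ * ∫ ω, exp (-(y - X ω) ^ 2 / 2) ∂μ) := funext hQ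
  have hX := hXint.aestronglyMeasurable
  have hc : 0 < (√(2 * π))⁻¹ := by positivity
  have hQ_deriv := hasDerivAt_neg_log_const_mul_integral_exp_neg_sq_sub_div_two hX hc
  refine ⟨fun y => (hQ_deriv y).differentiableAt, fun y => ⟨?_, ?_, (hQ_deriv y).deriv⟩⟩
  · rw [(hQ_deriv y).deriv,
      ((hasDerivAt_integral_exp_neg_sq_sub_div_two hX y).const_mul _).deriv]
    rw [mul_neg, neg_div, neg_neg, mul_div_mul_left _ _ hc.ne']
  · rw [(hQ_deriv y).deriv, integral_sub_mul_exp_neg_sq_sub_div_two hXint y, sub_div,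
      mul_div_cancel_right₀ _ (integral_exp_neg_sq_sub_div_two_pos hX y).ne']

/-- **Tweedie-type formula for `Q' = (-log p_Y)'`.**
For the scalar Gaussian channel `Y = X + N` with `X` integrable and `N ~ N(0,1)`
independent of `X`, write the density of `Y` as `p_Y = e^{-Q}`, where
`p_Y(y) = (1/√(2π)) E[exp(-(y-X)²/2)]`. Then `Q` is differentiable and
`Q'(y) = -p_Y'(y)/p_Y(y) = y - E[X | Y = y] = E[N | Y = y]` for every `y`,
the conditional expectations being given by the Gaussian-smoothing formula. -/
theorem deriv_neg_log_output_density
    {Ω : Type*} [MeasurableSpace Ω] (μ : Measure Ω) [IsProbabilityMeasure μ]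
    (X N : Ω → ℝ) (hXmeas : Measurable X) (hNmeas : Measurable N)
    (hXint : Integrable X μ)
    (hN : Measure.map N μ = gaussianReal 0 1)
    (hindep : IndepFun X N μ)
    (pY Q : ℝ → ℝ)
    (hpY : ∀ y, pY y = (Real.sqrt (2 * π))⁻¹ * ∫ ω, Real.exp (-(y - X ω) ^ 2 / 2) ∂μ)
    (hQ : ∀ y, Q y = -Real.log (pY y)) :
    Differentiable ℝ Q ∧ ∀ y : ℝ,
      deriv Q y = -(deriv pY y / pY y) ∧
      deriv Q y = y - (∫ ω, X ω * Real.exp (-(y - X ω) ^ 2 / 2) ∂μ) /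
          (∫ ω, Real.exp (-(y - X ω) ^ 2 / 2) ∂μ) ∧
      deriv Q y = (∫ ω, (y - X ω) * Real.exp (-(y - X ω) ^ 2 / 2) ∂μ) /
          (∫ ω, Real.exp (-(y - X ω) ^ 2 / 2) ∂μ) :=
  deriv_neg_log_output_density_general μ X hXint pY Q hpY hQ
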